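/- For all n ≥ 1, the number of partitions of n equals the number of partitions with cohook area equal to n; that is, p(n) = q(n), where p(n) = #{λ : |λ| = n} and q(n) = #{λ : |λ|_c = n}. -/

import Mathlib

attribute [local instance] Classical.propDecidable

noncomputable section

/-- A partition, recorded by its weakly decreasing, finitely supported sequence of
parts `λ_{i+1} = f i` (0-indexed). -/
def IsPartition (f : ℕ →₀ ℕ) : Prop := ∀ i j : ℕ, i ≤ j → f j ≤ f i

/-- The area `|λ| = Σ_i λ_i`. -/
def parea (f : ℕ →₀ ℕ) : ℕ := ∑ i ∈ f.support, f i

/-- The Durfee square side: the largest `k` with `λ_k ≥ k`. -/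
def pdurfee (f : ℕ →₀ ℕ) : ℕ := sSup {k : ℕ | 1 ≤ k ∧ k ≤ f (k - 1)}

/-- The conjugate partition: `pconj f j = λ'_j = #{i : λ_i ≥ j}` (for `j ≥ 1`). -/
def pconj (f : ℕ →₀ ℕ) (j : ℕ) : ℕ := (f.support.filter (fun r => j ≤ f r)).card

/-- The set of corners of a partition: the cells `(i,j) ∈ D(λ)` (1-based, so
`1 ≤ j ≤ λ_i`) with `(i+1,j) ∉ D(λ)` and `(i,j+1) ∉ D(λ)`. -/
def pcorners (f : ℕ →₀ ℕ) : Finset (ℕ × ℕ) :=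
  ((f.support.image (· + 1)) ×ˢ Finset.Icc 1 (f 0)).filter
    (fun p => p.2 ≤ f (p.1 - 1) ∧ f p.1 < p.2 ∧ f (p.1 - 1) < p.2 + 1)

/-- The cohook area `|λ|_c = Σ_{(i,j) ∈ Cor(λ)} (i + j - 1)`. -/
def pchArea (f : ℕ →₀ ℕ) : ℕ := ∑ p ∈ pcorners f, (p.1 + p.2 - 1)

/-- rank of v in A: number of elements of A strictly greater than v (0-indexed from top) -/
def rk (A : Finset ℕ) (v : ℕ) : ℕ := (A.filter (fun w => v < w)).card

/-- the t-th largest element of A (0-indexed), or 0 if t ≥ |A| -/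
def sel (A : Finset ℕ) (t : ℕ) : ℕ := ∑ v ∈ A.filter (fun v => rk A v = t), v

lemma rk_lt_rk {A : Finset ℕ} {v w : ℕ} (hw : w ∈ A) (hvw : v < w) :
    rk A w < rk A v := by
  apply Finset.card_lt_card
  constructor
  · intro x hx
    simp only [Finset.mem_filter] at hx ⊢
    exact ⟨hx.1, lt_trans hvw hx.2⟩
  · intro hsub
    have : w ∈ A.filter (fun x => v < x) := Finset.mem_filter.2 ⟨hw, hvw⟩
    have := hsub this
    simp only [Finset.mem_filter] at this
    exact lt_irrefl w this.2

lemma rk_injOn {A : Finset ℕ} : Set.InjOn (rk A) A := by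
  intro v hv w hw h
  by_contra hne
  rcases lt_or_gt_of_ne hne with hlt | hlt
  · have := rk_lt_rk (Finset.mem_coe.1 hw) hlt; omega
  · have := rk_lt_rk (Finset.mem_coe.1 hv) hlt; omega

lemma rk_lt_card {A : Finset ℕ} {v : ℕ} (hv : v ∈ A) : rk A v < A.card := by
  have : A.filter (fun w => v < w) ⊆ A.erase v := by
    intro x hx
    simp only [Finset.mem_filter] at hx
    exact Finset.mem_erase.2 ⟨Nat.ne_of_gt hx.2, hx.1⟩
  calc rk A v ≤ (A.erase v).card := Finset.card_le_card this
    _ < A.card := Finset.card_erase_lt_of_mem hv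

lemma exists_rk_eq {A : Finset ℕ} {t : ℕ} (ht : t < A.card) : ∃ v ∈ A, rk A v = t := by
  obtain ⟨v, hv, hvt⟩ :=
    Finset.surj_on_of_inj_on_of_card_le (s := A) (t := Finset.range A.card)
      (fun v _ => rk A v)
      (fun v hv => Finset.mem_range.2 (rk_lt_card hv))
      (fun v w hv hw h => rk_injOn (Finset.mem_coe.2 hv) (Finset.mem_coe.2 hw) h)
      (by simp) t (Finset.mem_range.2 ht)
  exact ⟨v, hv, hvt.symm⟩

lemma sel_eq {A : Finset ℕ} {v t : ℕ} (hv : v ∈ A) (hrk : rk A v = t) : sel A t = v := by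
  have : A.filter (fun w => rk A w = t) = {v} := by
    apply Finset.eq_singleton_iff_unique_mem.2
    refine ⟨Finset.mem_filter.2 ⟨hv, hrk⟩, ?_⟩
    intro w hw
    simp only [Finset.mem_filter] at hw
    exact rk_injOn hw.1 hv (hw.2.trans hrk.symm)
  simp [sel, this]

lemma sel_mem {A : Finset ℕ} {t : ℕ} (ht : t < A.card) :
    sel A t ∈ A ∧ rk A (sel A t) = t := by
  obtain ⟨v, hv, hrk⟩ := exists_rk_eq ht
  rw [sel_eq hv hrk]; exact ⟨hv, hrk⟩

lemma sel_eq_zero {A : Finset ℕ} {t : ℕ} (ht : A.card ≤ t) : sel A t = 0 := by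
  have : A.filter (fun w => rk A w = t) = ∅ := by
    apply Finset.filter_eq_empty_iff.2
    intro v hv hrk
    exact absurd hrk (Nat.ne_of_lt (lt_of_lt_of_le (rk_lt_card hv) ht))
  simp [sel, this]

lemma sel_add_le {A : Finset ℕ} {t t' : ℕ} (htt' : t ≤ t') (ht' : t' < A.card) :
    sel A t' + (t' - t) ≤ sel A t := by
  induction t' with
  | zero => simp_all
  | succ m ih =>
    rcases Nat.eq_or_lt_of_le htt' with h | h
    · subst h; simp
    · have hm : t ≤ m := Nat.lt_succ_iff.1 h
      have hmc : m < A.card := Nat.lt_of_succ_lt ht'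
      have step : sel A (m+1) + 1 ≤ sel A m := by
        have h1 := sel_mem ht'
        have h2 := sel_mem hmc
        by_contra hc
        push_neg at hc
        have hle : sel A m ≤ sel A (m+1) := Nat.lt_succ_iff.1 hc
        rcases Nat.eq_or_lt_of_le hle with he | hl
        · have : rk A (sel A m) = rk A (sel A (m+1)) := by rw [he]
          rw [h1.2, h2.2] at this
          omega
        · have := rk_lt_rk h1.1 hl
          rw [h1.2, h2.2] at this
          omega
      have := ih hm hmc
      omega

lemma sel_anti {A : Finset ℕ} {t t' : ℕ} (htt' : t ≤ t') :
    sel A t' ≤ sel A t := by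
  rcases lt_or_ge t' A.card with h | h
  · have := sel_add_le htt' h; omega
  · rw [sel_eq_zero h]; exact Nat.zero_le _

lemma sel_pos {A : Finset ℕ} (h0 : 0 ∉ A) {t : ℕ} (ht : t < A.card) : 1 ≤ sel A t := by
  have := (sel_mem ht).1
  rcases Nat.eq_zero_or_pos (sel A t) with h | h
  · rw [h] at this; exact absurd this h0
  · exact h

lemma image_sel {A : Finset ℕ} : (Finset.range A.card).image (sel A) = A := by
  apply Finset.Subset.antisymm
  · intro v hv
    simp only [Finset.mem_image, Finset.mem_range] at hv
    obtain ⟨t, ht, rfl⟩ := hv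
    exact (sel_mem ht).1
  · intro v hv
    simp only [Finset.mem_image, Finset.mem_range]
    exact ⟨rk A v, rk_lt_card hv, sel_eq hv rfl⟩

lemma sel_injOn {A : Finset ℕ} : Set.InjOn (sel A) (Finset.range A.card) := by
  intro t ht t' ht' h
  simp only [Finset.coe_range, Set.mem_Iio] at ht ht'
  rw [← (sel_mem ht).2, ← (sel_mem ht').2, h]
/-- descent rows (1-indexed): i ≥ 1 with f (i-1) > f i -/
def Dset (f : ℕ →₀ ℕ) : Finset ℕ := (f.support.image (· + 1)).filter (fun i => f i < f (i - 1))

/-- distinct (nonzero) part values -/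
def Vset (f : ℕ →₀ ℕ) : Finset ℕ := f.support.image f

lemma mem_Dset {f : ℕ →₀ ℕ} {i : ℕ} :
    i ∈ Dset f ↔ 1 ≤ i ∧ f i < f (i - 1) := by
  simp only [Dset, Finset.mem_filter, Finset.mem_image, Finsupp.mem_support_iff]
  constructor
  · rintro ⟨⟨r, hr, rfl⟩, h2⟩
    exact ⟨Nat.le_add_left 1 r, h2⟩
  · rintro ⟨h1, h2⟩
    refine ⟨⟨i - 1, ?_, by omega⟩, h2⟩
    omega

lemma mem_Vset {f : ℕ →₀ ℕ} {v : ℕ} :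
    v ∈ Vset f ↔ v ≠ 0 ∧ ∃ r, f r = v := by
  simp only [Vset, Finset.mem_image, Finsupp.mem_support_iff]
  constructor
  · rintro ⟨r, hr, rfl⟩; exact ⟨hr, r, rfl⟩
  · rintro ⟨hv, r, rfl⟩; exact ⟨r, hv, rfl⟩

lemma image_Dset {f : ℕ →₀ ℕ} (hf : IsPartition f) :
    (Dset f).image (fun i => f (i - 1)) = Vset f := by
  apply Finset.Subset.antisymm
  · intro v hv
    simp only [Finset.mem_image] at hv
    obtain ⟨i, hi, rfl⟩ := hv
    rw [mem_Dset] at hi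
    exact mem_Vset.2 ⟨by omega, i - 1, rfl⟩
  · intro v hv
    rw [mem_Vset] at hv
    obtain ⟨hv0, r, hr⟩ := hv
    have hbdd : BddAbove {s : ℕ | f s = v} := by
      refine ⟨f.support.sup id, ?_⟩
      intro s hs
      simp only [Set.mem_setOf_eq] at hs
      exact Finset.le_sup (f := id) (Finsupp.mem_support_iff.2 (by rw [hs]; exact hv0))
    have hne : {s : ℕ | f s = v}.Nonempty := ⟨r, hr⟩
    set m := sSup {s : ℕ | f s = v} with hm
    have hmem : f m = v := Nat.sSup_mem hne hbdd
    have hnot : f (m + 1) ≠ v := by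
      intro hc
      have : m + 1 ≤ m := le_csSup hbdd hc
      omega
    have hlt : f (m + 1) < f m := lt_of_le_of_ne (hf m (m+1) (by omega)) (by rw [hmem]; exact hnot)
    simp only [Finset.mem_image]
    exact ⟨m + 1, mem_Dset.2 ⟨by omega, by simpa using hlt⟩, by simpa using hmem⟩

lemma injOn_Dset {f : ℕ →₀ ℕ} (hf : IsPartition f) :
    Set.InjOn (fun i => f (i - 1)) (Dset f) := by
  intro i hi j hj h
  simp only [Finset.mem_coe, mem_Dset] at hi hj
  by_contra hne
  rcases lt_or_gt_of_ne hne with hlt | hlt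
  · have h1 : f (j - 1) ≤ f i := hf i (j-1) (by omega)
    simp only at h
    omega
  · have h1 : f (i - 1) ≤ f j := hf j (i-1) (by omega)
    simp only at h
    omega

lemma card_Dset {f : ℕ →₀ ℕ} (hf : IsPartition f) : (Dset f).card = (Vset f).card := by
  rw [← image_Dset hf, Finset.card_image_of_injOn (injOn_Dset hf)]

lemma pcorners_eq {f : ℕ →₀ ℕ} (hf : IsPartition f) :
    pcorners f = (Dset f).image (fun i => (i, f (i - 1))) := by
  ext ⟨i, j⟩
  simp only [pcorners, Finset.mem_filter, Finset.mem_product, Finset.mem_image,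
    Finset.mem_Icc, mem_Dset, Finsupp.mem_support_iff, Prod.mk.injEq]
  constructor
  · rintro ⟨⟨⟨r, hr, rfl⟩, hj1, hj2⟩, h1, h2, h3⟩
    have e : r + 1 - 1 = r := rfl
    rw [e] at h1 h3
    exact ⟨r + 1, ⟨by omega, by rw [e]; omega⟩, rfl, by rw [e]; omega⟩
  · rintro ⟨i', ⟨hi1, hi2⟩, rfl, rfl⟩
    refine ⟨⟨⟨i' - 1, by omega, by omega⟩, by omega, ?_⟩, le_refl _, hi2, by omega⟩
    exact hf 0 (i' - 1) (Nat.zero_le _)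

lemma pchArea_eq {f : ℕ →₀ ℕ} (hf : IsPartition f) :
    pchArea f + (Dset f).card = (∑ i ∈ Dset f, i) + (∑ v ∈ Vset f, v) := by
  have h1 : pchArea f = ∑ i ∈ Dset f, (i + f (i - 1) - 1) := by
    rw [pchArea, pcorners_eq hf, Finset.sum_image]
    intro i hi j hj h
    exact congrArg Prod.fst h
  have h2 : ∑ v ∈ Vset f, v = ∑ i ∈ Dset f, f (i - 1) := by
    rw [← image_Dset hf, Finset.sum_image (fun i hi j hj h => injOn_Dset hf hi hj h)]
  rw [h1, h2, ← Finset.sum_add_distrib, Finset.card_eq_sum_ones, ← Finset.sum_add_distrib]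
  apply Finset.sum_congr rfl
  intro i hi
  rw [mem_Dset] at hi
  omega
def tauc (I : Finset ℕ) (r : ℕ) : ℕ := (I.filter (fun x => x ≤ r)).card

lemma tauc_mono (I : Finset ℕ) {r r' : ℕ} (h : r ≤ r') : tauc I r ≤ tauc I r' := by
  apply Finset.card_le_card
  intro x hx
  simp only [Finset.mem_filter] at hx ⊢
  exact ⟨hx.1, by omega⟩

lemma tauc_eq_card {I : Finset ℕ} {r : ℕ} (h : I.sup id ≤ r) : tauc I r = I.card := by
  unfold tauc
  congr 1
  apply Finset.filter_true_of_mem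
  intro x hx
  exact le_trans (Finset.le_sup (f := id) hx) h

def rebuild (A I : Finset ℕ) (h : A.card = I.card) : ℕ →₀ ℕ :=
  Finsupp.onFinset (Finset.range (I.sup id)) (fun r => sel A (tauc I r)) (by
    intro r hr
    rw [Finset.mem_range]
    by_contra hc
    push_neg at hc
    exact hr (show sel A (tauc I r) = 0 by
      rw [tauc_eq_card hc, ← h]; exact sel_eq_zero (le_refl _)))

lemma rebuild_apply (A I : Finset ℕ) (h : A.card = I.card) (r : ℕ) :
    rebuild A I h r = sel A (tauc I r) := rfl

lemma rebuild_isPartition (A I : Finset ℕ) (h : A.card = I.card) :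
    IsPartition (rebuild A I h) := by
  intro i j hij
  rw [rebuild_apply, rebuild_apply]
  exact sel_anti (tauc_mono I hij)

lemma tauc_pred_lt {I : Finset ℕ} {i : ℕ} (hi : i ∈ I) (h1 : 1 ≤ i) :
    tauc I (i - 1) < tauc I i := by
  apply Finset.card_lt_card
  constructor
  · intro x hx
    simp only [Finset.mem_filter] at hx ⊢
    exact ⟨hx.1, by omega⟩
  · intro hsub
    have := hsub (Finset.mem_filter.2 ⟨hi, le_refl i⟩)
    simp only [Finset.mem_filter] at this
    omega

lemma tauc_pred_lt_card {I : Finset ℕ} {i : ℕ} (hi : i ∈ I) (h1 : 1 ≤ i) :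
    tauc I (i - 1) < I.card :=
  lt_of_lt_of_le (tauc_pred_lt hi h1) (Finset.card_le_card (Finset.filter_subset _ _))

lemma tauc_eq_of_not_mem {I : Finset ℕ} {i : ℕ} (hi : i ∉ I) (h1 : 1 ≤ i) :
    tauc I (i - 1) = tauc I i := by
  unfold tauc
  congr 1
  apply Finset.filter_congr
  intro x hx
  constructor
  · intro h'; omega
  · intro h'
    rcases Nat.eq_or_lt_of_le h' with he | hl
    · exact absurd (he ▸ hx) hi
    · omega

lemma Dset_rebuild (A I : Finset ℕ) (h : A.card = I.card) (h0A : 0 ∉ A) (h0I : 0 ∉ I) :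
    Dset (rebuild A I h) = I := by
  ext i
  rw [mem_Dset, rebuild_apply, rebuild_apply]
  constructor
  · rintro ⟨h1, h2⟩
    by_contra hc
    rw [tauc_eq_of_not_mem hc h1] at h2
    exact lt_irrefl _ h2
  · intro hi
    have h1 : 1 ≤ i := by
      rcases Nat.eq_zero_or_pos i with h' | h'
      · exact absurd (h' ▸ hi) h0I
      · exact h'
    refine ⟨h1, ?_⟩
    have ht : tauc I (i - 1) < A.card := h ▸ tauc_pred_lt_card hi h1
    have hlt := tauc_pred_lt hi h1
    rcases lt_or_ge (tauc I i) A.card with hc | hc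
    · have := sel_add_le (le_of_lt hlt) hc
      have hpos := sel_pos h0A ht
      omega
    · rw [sel_eq_zero hc]
      exact sel_pos h0A ht

lemma count_lt_eq {I : Finset ℕ} {x : ℕ} (hx : x ∈ I) :
    (I.filter (fun y => y < x)).card + rk I x + 1 = I.card := by
  have h1 : (I.filter (fun y => y < x)).card + (I.filter (fun y => ¬ y < x)).card = I.card :=
    Finset.card_filter_add_card_filter_not _
  have h2 : I.filter (fun y => ¬ y < x) = insert x (I.filter (fun y => x < y)) := by
    ext y
    simp only [Finset.mem_filter, Finset.mem_insert]
    constructor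
    · rintro ⟨hy, hnlt⟩
      rcases Nat.eq_or_lt_of_le (Nat.le_of_not_lt hnlt) with he | hl
      · exact Or.inl he.symm
      · exact Or.inr ⟨hy, hl⟩
    · rintro (rfl | ⟨hy, hgt⟩)
      · exact ⟨hx, lt_irrefl _⟩
      · exact ⟨hy, by omega⟩
  have h3 : x ∉ I.filter (fun y => x < y) := by
    simp only [Finset.mem_filter]
    rintro ⟨_, hlt⟩; exact lt_irrefl _ hlt
  rw [h2, Finset.card_insert_of_notMem h3] at h1
  unfold rk
  omega

lemma tauc_surj {I : Finset ℕ} (h0I : 0 ∉ I) {t : ℕ} (ht : t < I.card) :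
    ∃ r, tauc I r = t := by
  obtain ⟨x, hx, hrk⟩ := exists_rk_eq (A := I) (t := I.card - 1 - t) (by omega)
  have hcount := count_lt_eq hx
  have hx1 : 1 ≤ x := by
    rcases Nat.eq_zero_or_pos x with h' | h'
    · exact absurd (h' ▸ hx) h0I
    · exact h'
  refine ⟨x - 1, ?_⟩
  have : I.filter (fun y => y ≤ x - 1) = I.filter (fun y => y < x) := by
    apply Finset.filter_congr
    intro y hy
    constructor <;> intro h' <;> omega
  unfold tauc
  rw [this]
  omega

lemma Vset_rebuild (A I : Finset ℕ) (h : A.card = I.card) (h0A : 0 ∉ A) (h0I : 0 ∉ I) :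
    Vset (rebuild A I h) = A := by
  ext v
  rw [mem_Vset]
  constructor
  · rintro ⟨hv0, r, hr⟩
    rw [rebuild_apply] at hr
    have ht : tauc I r < A.card := by
      by_contra hc
      rw [sel_eq_zero (Nat.le_of_not_lt hc)] at hr
      exact hv0 hr.symm
    exact hr ▸ (sel_mem ht).1
  · intro hv
    have hv0 : v ≠ 0 := fun hc => h0A (hc ▸ hv)
    have ht : rk A v < I.card := h ▸ rk_lt_card hv
    obtain ⟨r, hr⟩ := tauc_surj h0I ht
    exact ⟨hv0, r, by rw [rebuild_apply, hr, sel_eq hv rfl]⟩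

lemma rebuild_round {f : ℕ →₀ ℕ} (hf : IsPartition f) :
    rebuild (Vset f) (Dset f) (card_Dset hf).symm = f := by
  ext r
  rw [rebuild_apply]
  rcases Nat.eq_zero_or_pos (f r) with h0 | h0
  · rw [h0]
    apply sel_eq_zero
    have : Dset f ⊆ Finset.filter (fun x => x ≤ r) (Dset f) := by
      intro i hi
      refine Finset.mem_filter.2 ⟨hi, ?_⟩
      rw [mem_Dset] at hi
      by_contra hc
      push_neg at hc
      have : f (i - 1) ≤ f r := hf r (i - 1) (by omega)
      omega
    have htauc : tauc (Dset f) r = (Dset f).card :=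
      le_antisymm (Finset.card_le_card (Finset.filter_subset _ _)) (Finset.card_le_card this)
    rw [htauc, ← card_Dset hf]
  · apply sel_eq (mem_Vset.2 ⟨by omega, r, rfl⟩)
    show (Finset.filter (fun w => f r < w) (Vset f)).card = _
    have himg : (Vset f).filter (fun w => f r < w)
        = ((Dset f).filter (fun i => i ≤ r)).image (fun i => f (i - 1)) := by
      ext v
      simp only [Finset.mem_filter, Finset.mem_image]
      constructor
      · rintro ⟨hv, hgt⟩
        rw [← image_Dset hf] at hv
        simp only [Finset.mem_image] at hv
        obtain ⟨i, hi, rfl⟩ := hv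
        refine ⟨i, ⟨hi, ?_⟩, rfl⟩
        by_contra hc
        push_neg at hc
        have : f (i - 1) ≤ f r := hf r (i - 1) (by omega)
        omega
      · rintro ⟨i, ⟨hi, hir⟩, rfl⟩
        have hi' := hi
        rw [mem_Dset] at hi'
        refine ⟨mem_Vset.2 ⟨by omega, i - 1, rfl⟩, ?_⟩
        have : f i ≥ f r := hf i r hir
        omega
    have hinj : Set.InjOn (fun i => f (i - 1)) ((Dset f).filter (fun i => i ≤ r)) := by
      apply Set.InjOn.mono _ (injOn_Dset hf)
      intro x hx
      simp only [Finset.coe_filter, Set.mem_setOf_eq] at hx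
      exact hx.1
    rw [himg, Finset.card_image_of_injOn hinj]
    rfl
section Enum

variable {k : ℕ} {b : ℕ → ℕ}

lemma enum_injOn (hb : ∀ s s', s < s' → s' < k → b s' < b s) :
    Set.InjOn b (Finset.range k) := by
  intro s hs s' hs' h
  simp only [Finset.coe_range, Set.mem_Iio] at hs hs'
  by_contra hne
  rcases lt_or_gt_of_ne hne with hl | hl
  · exact absurd h (Nat.ne_of_gt (hb s s' hl hs'))
  · exact absurd h.symm (Nat.ne_of_gt (hb s' s hl hs))

lemma enum_card (hb : ∀ s s', s < s' → s' < k → b s' < b s) :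
    ((Finset.range k).image b).card = k := by
  rw [Finset.card_image_of_injOn (enum_injOn hb), Finset.card_range]

lemma enum_filter_gt (hb : ∀ s s', s < s' → s' < k → b s' < b s) {s : ℕ} (hs : s < k) :
    ((Finset.range k).image b).filter (fun w => b s < w) = (Finset.range s).image b := by
  ext w
  simp only [Finset.mem_filter, Finset.mem_image, Finset.mem_range]
  constructor
  · rintro ⟨⟨s', hs', rfl⟩, hgt⟩
    refine ⟨s', ?_, rfl⟩
    by_contra hc
    push_neg at hc
    rcases Nat.eq_or_lt_of_le hc with he | hl
    · rw [← he] at hgt; exact lt_irrefl _ hgt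
    · exact absurd hgt (not_lt_of_gt (hb s s' hl hs'))
  · rintro ⟨s', hs', rfl⟩
    exact ⟨⟨s', lt_trans hs' hs, rfl⟩, hb s' s hs' hs⟩

lemma enum_rk (hb : ∀ s s', s < s' → s' < k → b s' < b s) {s : ℕ} (hs : s < k) :
    rk ((Finset.range k).image b) (b s) = s := by
  rw [rk, enum_filter_gt hb hs, Finset.card_image_of_injOn
    (Set.InjOn.mono (by
      intro x hx
      simp only [Finset.coe_range, Set.mem_Iio] at hx ⊢
      omega) (enum_injOn hb)), Finset.card_range]

lemma enum_sel (hb : ∀ s s', s < s' → s' < k → b s' < b s) {s : ℕ} (hs : s < k) :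
    sel ((Finset.range k).image b) s = b s :=
  sel_eq (Finset.mem_image.2 ⟨s, Finset.mem_range.2 hs, rfl⟩) (enum_rk hb hs)

end Enum

/-- basic: positivity of the first part -/
lemma f0_pos {f : ℕ →₀ ℕ} (hf : IsPartition f) (h : parea f ≠ 0) : 1 ≤ f 0 := by
  by_contra hc
  push_neg at hc
  apply h
  have : ∀ r, f r = 0 := fun r => Nat.le_zero.1 (le_trans (hf 0 r (Nat.zero_le r)) (by omega))
  simp [parea, this]

/-- column lengths: the key characterization -/
lemma lt_pconj_iff {f : ℕ →₀ ℕ} (hf : IsPartition f) {c r : ℕ} (hc : 1 ≤ c) :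
    r < pconj f c ↔ c ≤ f r := by
  constructor
  · intro h
    by_contra hcon
    push_neg at hcon
    have hsub : f.support.filter (fun r' => c ≤ f r') ⊆ Finset.range r := by
      intro r' hr'
      simp only [Finset.mem_filter] at hr'
      rw [Finset.mem_range]
      by_contra hc'
      push_neg at hc'
      have := hf r r' hc'
      omega
    have := Finset.card_le_card hsub
    rw [Finset.card_range] at this
    unfold pconj at h
    omega
  · intro h
    have hsub : Finset.range (r + 1) ⊆ f.support.filter (fun r' => c ≤ f r') := by
      intro r' hr'
      rw [Finset.mem_range] at hr'
      have hle : c ≤ f r' := le_trans h (hf r' r (by omega))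
      exact Finset.mem_filter.2 ⟨Finsupp.mem_support_iff.2 (by omega), hle⟩
    have := Finset.card_le_card hsub
    rw [Finset.card_range] at this
    unfold pconj
    omega

lemma pconj_anti (f : ℕ →₀ ℕ) {c c' : ℕ} (h : c ≤ c') : pconj f c' ≤ pconj f c := by
  apply Finset.card_le_card
  intro x hx
  simp only [Finset.mem_filter] at hx ⊢
  exact ⟨hx.1, le_trans h hx.2⟩

/-- Durfee square basic properties -/
lemma durfee_spec {f : ℕ →₀ ℕ} (hf : IsPartition f) (h0 : 1 ≤ f 0) :
    1 ≤ pdurfee f ∧ pdurfee f ≤ f (pdurfee f - 1) ∧ f (pdurfee f) ≤ pdurfee f := by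
  set S : Set ℕ := {k : ℕ | 1 ≤ k ∧ k ≤ f (k - 1)} with hS
  have hne : S.Nonempty := ⟨1, by simp [hS]; omega⟩
  have hbdd : BddAbove S := by
    refine ⟨f 0, ?_⟩
    intro x hx
    simp only [hS, Set.mem_setOf_eq] at hx
    exact le_trans hx.2 (hf 0 (x - 1) (Nat.zero_le _))
  have hmem : pdurfee f ∈ S := Nat.sSup_mem hne hbdd
  simp only [hS, Set.mem_setOf_eq] at hmem
  refine ⟨hmem.1, hmem.2, ?_⟩
  by_contra hc
  push_neg at hc
  have : pdurfee f + 1 ∈ S := by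
    simp only [hS, Set.mem_setOf_eq]
    constructor
    · omega
    · simpa using hc
  have := le_csSup hbdd this
  unfold pdurfee at this
  rw [← hS] at this
  omega

lemma durfee_eq {f : ℕ →₀ ℕ} (hf : IsPartition f) {k : ℕ} (hk : 1 ≤ k)
    (h1 : k ≤ f (k - 1)) (h2 : f k ≤ k) : pdurfee f = k := by
  set S : Set ℕ := {m : ℕ | 1 ≤ m ∧ m ≤ f (m - 1)} with hS
  have hmem : k ∈ S := ⟨hk, h1⟩
  have hbdd : BddAbove S := by
    refine ⟨f 0, ?_⟩
    intro x hx
    simp only [hS, Set.mem_setOf_eq] at hx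
    exact le_trans hx.2 (hf 0 (x - 1) (Nat.zero_le _))
  apply le_antisymm
  · apply csSup_le ⟨k, hmem⟩
    intro m hm
    simp only [hS, Set.mem_setOf_eq] at hm
    by_contra hc
    push_neg at hc
    have : f (m - 1) ≤ f k := hf k (m - 1) (by omega)
    omega
  · exact le_csSup hbdd hmem
/-- the diagonal arm values (Frobenius a-coordinates, +1) -/
def Aset (f : ℕ →₀ ℕ) : Finset ℕ := (Finset.range (pdurfee f)).image (fun r => f r - r)

/-- the diagonal leg values (Frobenius b-coordinates, +1) -/
def Iset (f : ℕ →₀ ℕ) : Finset ℕ := (Finset.range (pdurfee f)).image (fun s => pconj f (s + 1) - s)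

section AsetIset

variable {f : ℕ →₀ ℕ}

lemma f_lt_of_lt_durfee (hf : IsPartition f) {r : ℕ} (hr : r < pdurfee f) (h0 : 1 ≤ f 0) :
    pdurfee f ≤ f r := by
  obtain ⟨h1, h2, _⟩ := durfee_spec hf h0
  exact le_trans h2 (hf r (pdurfee f - 1) (by omega))

lemma Aset_anti (hf : IsPartition f) (h0 : 1 ≤ f 0) :
    ∀ s s', s < s' → s' < pdurfee f → f s' - s' < f s - s := by
  intro s s' hss' hs'
  have h1 : f s' ≤ f s := hf s s' (le_of_lt hss')
  have h2 : pdurfee f ≤ f s' := f_lt_of_lt_durfee hf hs' h0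
  omega

lemma pconj_ge_of_lt_durfee (hf : IsPartition f) {s : ℕ} (hs : s < pdurfee f) (h0 : 1 ≤ f 0) :
    pdurfee f ≤ pconj f (s + 1) := by
  obtain ⟨h1, h2, _⟩ := durfee_spec hf h0
  have hk : pdurfee f - 1 < pconj f (pdurfee f) := (lt_pconj_iff hf (by omega)).2 h2
  have : pconj f (pdurfee f) ≤ pconj f (s + 1) := pconj_anti f (by omega)
  omega

lemma Iset_anti (hf : IsPartition f) (h0 : 1 ≤ f 0) :
    ∀ s s', s < s' → s' < pdurfee f → pconj f (s' + 1) - s' < pconj f (s + 1) - s := by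
  intro s s' hss' hs'
  have h1 : pconj f (s' + 1) ≤ pconj f (s + 1) := pconj_anti f (by omega)
  have h2 : pdurfee f ≤ pconj f (s' + 1) := pconj_ge_of_lt_durfee hf hs' h0
  omega

lemma card_Aset (hf : IsPartition f) (h0 : 1 ≤ f 0) : (Aset f).card = pdurfee f :=
  enum_card (Aset_anti hf h0)

lemma card_Iset (hf : IsPartition f) (h0 : 1 ≤ f 0) : (Iset f).card = pdurfee f :=
  enum_card (Iset_anti hf h0)

lemma zero_not_mem_Aset (hf : IsPartition f) (h0 : 1 ≤ f 0) : 0 ∉ Aset f := by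
  unfold Aset
  simp only [Finset.mem_image, Finset.mem_range, not_exists]
  intro r
  rintro ⟨hr, hc⟩
  have := f_lt_of_lt_durfee hf hr h0
  omega

lemma zero_not_mem_Iset (hf : IsPartition f) (h0 : 1 ≤ f 0) : 0 ∉ Iset f := by
  unfold Iset
  simp only [Finset.mem_image, Finset.mem_range, not_exists]
  intro s
  rintro ⟨hs, hc⟩
  have := pconj_ge_of_lt_durfee hf hs h0
  omega

/-- indicator-count: number of s < k with s+1 ≤ m -/
lemma filter_range_card (k m : ℕ) :
    ((Finset.range k).filter (fun s => s + 1 ≤ m)).card = min m k := by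
  have : (Finset.range k).filter (fun s => s + 1 ≤ m) = Finset.range (min m k) := by
    ext s
    simp only [Finset.mem_filter, Finset.mem_range]
    omega
  rw [this, Finset.card_range]

/-- double counting: the first k columns -/
lemma sum_pconj (hf : IsPartition f) :
    ∀ k : ℕ, ∑ s ∈ Finset.range k, pconj f (s + 1) = ∑ r ∈ f.support, min (f r) k := by
  intro k
  have h1 : ∀ s, pconj f (s + 1) = ∑ r ∈ f.support, (if s + 1 ≤ f r then 1 else 0) := by
    intro s
    rw [pconj, Finset.card_filter]
  calc ∑ s ∈ Finset.range k, pconj f (s + 1)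
      = ∑ s ∈ Finset.range k, ∑ r ∈ f.support, (if s + 1 ≤ f r then 1 else 0) := by
        exact Finset.sum_congr rfl (fun s _ => h1 s)
    _ = ∑ r ∈ f.support, ∑ s ∈ Finset.range k, (if s + 1 ≤ f r then 1 else 0) :=
        Finset.sum_comm
    _ = ∑ r ∈ f.support, min (f r) k := by
        apply Finset.sum_congr rfl
        intro r _
        rw [← filter_range_card (k) (f r), Finset.card_filter]

/-- the key area identity:  Σ Aset + Σ Iset = parea + durfee -/
lemma sum_Aset_Iset (hf : IsPartition f) (h0 : 1 ≤ f 0) :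
    (∑ v ∈ Aset f, v) + (∑ x ∈ Iset f, x) = parea f + pdurfee f := by
  set k := pdurfee f with hk
  obtain ⟨hk1, hk2, hk3⟩ := durfee_spec hf h0
  rw [← hk] at hk1 hk2 hk3
  -- sums over images
  have hA : ∑ v ∈ Aset f, v = ∑ r ∈ Finset.range k, (f r - r) := by
    rw [Aset, ← hk, Finset.sum_image (fun x hx y hy h =>
      enum_injOn (Aset_anti hf h0) (by simpa using hx) (by simpa using hy) h)]
  have hI : ∑ x ∈ Iset f, x = ∑ s ∈ Finset.range k, (pconj f (s + 1) - s) := by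
    rw [Iset, ← hk, Finset.sum_image (fun x hx y hy h =>
      enum_injOn (Iset_anti hf h0) (by simpa using hx) (by simpa using hy) h)]
  -- remove truncated subtraction
  have hA2 : (∑ r ∈ Finset.range k, (f r - r)) + (∑ r ∈ Finset.range k, r)
      = ∑ r ∈ Finset.range k, f r := by
    rw [← Finset.sum_add_distrib]
    apply Finset.sum_congr rfl
    intro r hr
    rw [Finset.mem_range] at hr
    have := f_lt_of_lt_durfee hf (hk ▸ hr) h0
    omega
  have hI2 : (∑ s ∈ Finset.range k, (pconj f (s + 1) - s)) + (∑ s ∈ Finset.range k, s)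
      = ∑ s ∈ Finset.range k, pconj f (s + 1) := by
    rw [← Finset.sum_add_distrib]
    apply Finset.sum_congr rfl
    intro s hs
    rw [Finset.mem_range] at hs
    have := pconj_ge_of_lt_durfee hf (hk ▸ hs) h0
    omega
  -- split support by r < k
  have hrange_sub : Finset.range k ⊆ f.support := by
    intro r hr
    rw [Finset.mem_range] at hr
    apply Finsupp.mem_support_iff.2
    have := f_lt_of_lt_durfee hf (hk ▸ hr) h0
    omega
  have hfilter : f.support.filter (fun r => r < k) = Finset.range k := by
    ext r
    simp only [Finset.mem_filter, Finset.mem_range]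
    constructor
    · rintro ⟨_, h⟩; exact h
    · intro h; exact ⟨hrange_sub (Finset.mem_range.2 h), h⟩
  have hsplit : parea f = (∑ r ∈ Finset.range k, f r)
      + ∑ r ∈ f.support.filter (fun r => ¬ r < k), f r := by
    rw [parea, ← Finset.sum_filter_add_sum_filter_not f.support (fun r => r < k), hfilter]
  have hmin : ∑ r ∈ f.support, min (f r) k
      = k * k + ∑ r ∈ f.support.filter (fun r => ¬ r < k), f r := by
    rw [← Finset.sum_filter_add_sum_filter_not f.support (fun r => r < k), hfilter]
    congr 1
    · have : ∀ r ∈ Finset.range k, min (f r) k = k := by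
        intro r hr
        rw [Finset.mem_range] at hr
        have := f_lt_of_lt_durfee hf (hk ▸ hr) h0
        omega
      rw [Finset.sum_congr rfl this, Finset.sum_const, Finset.card_range, smul_eq_mul]
    · apply Finset.sum_congr rfl
      intro r hr
      simp only [Finset.mem_filter] at hr
      have : f r ≤ f k := hf k r (by omega)
      omega
  have hgauss : (∑ r ∈ Finset.range k, r) * 2 = k * (k - 1) := Finset.sum_range_id_mul_two k
  have hsp := sum_pconj hf k
  -- combine
  have hksq : k * k = k + (∑ r ∈ Finset.range k, r) * 2 := by
    rw [hgauss]
    cases k with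
    | zero => simp
    | succ m =>
      simp only [Nat.succ_sub_one]
      ring
  omega
lemma rk_le_card (I : Finset ℕ) (x : ℕ) : rk I x ≤ I.card :=
  Finset.card_le_card (Finset.filter_subset _ _)

def buildL (A I : Finset ℕ) : ℕ →₀ ℕ :=
  Finsupp.onFinset (Finset.range (A.card + I.sup id + I.card))
    (fun r => if r < A.card then sel A r + r
      else (I.filter (fun x => r + 1 ≤ x + rk I x)).card) (by
    intro r hr
    rw [Finset.mem_range]
    by_contra hc
    push_neg at hc
    apply hr
    have h1 : ¬ r < A.card := by omega
    have h2 : I.filter (fun x => r + 1 ≤ x + rk I x) = ∅ := by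
      apply Finset.filter_eq_empty_iff.2
      intro x hx
      have hxs : x ≤ I.sup id := Finset.le_sup (f := id) hx
      have := rk_le_card I x
      omega
    simp only [h1, if_false, h2, Finset.card_empty])

lemma buildL_low {A I : Finset ℕ} {r : ℕ} (hr : r < A.card) :
    buildL A I r = sel A r + r := by
  show (if r < A.card then _ else _) = _
  rw [if_pos hr]

lemma buildL_high {A I : Finset ℕ} {r : ℕ} (hr : ¬ r < A.card) :
    buildL A I r = (I.filter (fun x => r + 1 ≤ x + rk I x)).card := by
  show (if r < A.card then _ else _) = _
  rw [if_neg hr]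

lemma mem_I_bound {I : Finset ℕ} (h0I : 0 ∉ I) {x : ℕ} (hx : x ∈ I) :
    I.card ≤ x + rk I x := by
  have ht : rk I x < I.card := rk_lt_card hx
  have hsel : sel I (rk I x) = x := sel_eq hx rfl
  have h1 := sel_add_le (A := I) (t := rk I x) (t' := I.card - 1) (by omega) (by omega)
  have h2 : 1 ≤ sel I (I.card - 1) := sel_pos h0I (by omega)
  omega

lemma buildL_isPartition {A I : Finset ℕ} (hcard : A.card = I.card) (h0A : 0 ∉ A) :
    IsPartition (buildL A I) := by
  intro i j hij
  rcases lt_or_ge j A.card with hj | hj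
  · have hi : i < A.card := lt_of_le_of_lt hij hj
    rw [buildL_low hi, buildL_low hj]
    have := sel_add_le hij hj
    omega
  · rw [buildL_high (by omega)]
    rcases lt_or_ge i A.card with hi | hi
    · rw [buildL_low hi]
      have h1 := sel_add_le (A := A) (t := i) (t' := A.card - 1) (by omega) (by omega)
      have h2 : 1 ≤ sel A (A.card - 1) := sel_pos h0A (by omega)
      have h3 : (I.filter (fun x => j + 1 ≤ x + rk I x)).card ≤ I.card :=
        Finset.card_le_card (Finset.filter_subset _ _)
      omega
    · rw [buildL_high (by omega)]
      apply Finset.card_le_card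
      intro x hx
      simp only [Finset.mem_filter] at hx ⊢
      exact ⟨hx.1, by omega⟩

lemma buildL_f0 {A I : Finset ℕ} (h0A : 0 ∉ A) (hk : 1 ≤ A.card) :
    1 ≤ buildL A I 0 := by
  rw [buildL_low hk]
  have := sel_pos h0A hk
  omega

lemma buildL_durfee {A I : Finset ℕ} (hcard : A.card = I.card) (h0A : 0 ∉ A)
    (hk : 1 ≤ A.card) : pdurfee (buildL A I) = A.card := by
  apply durfee_eq (buildL_isPartition hcard h0A) hk
  · rw [buildL_low (by omega)]
    have := sel_pos h0A (t := A.card - 1) (by omega)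
    omega
  · rw [buildL_high (by omega)]
    calc (I.filter (fun x => A.card + 1 ≤ x + rk I x)).card
        ≤ I.card := Finset.card_le_card (Finset.filter_subset _ _)
      _ = A.card := hcard.symm

lemma buildL_Aset {A I : Finset ℕ} (hcard : A.card = I.card) (h0A : 0 ∉ A)
    (hk : 1 ≤ A.card) : Aset (buildL A I) = A := by
  rw [Aset, buildL_durfee hcard h0A hk]
  rw [show ((Finset.range A.card).image fun r => buildL A I r - r)
      = (Finset.range A.card).image (sel A) from ?_, image_sel]
  apply Finset.image_congr
  intro r hr
  simp only [Finset.coe_range, Set.mem_Iio] at hr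
  show buildL A I r - r = sel A r
  rw [buildL_low hr]
  omega

lemma buildL_pconj {A I : Finset ℕ} (hcard : A.card = I.card) (h0A : 0 ∉ A) (h0I : 0 ∉ I)
    {s : ℕ} (hs : s < A.card) : pconj (buildL A I) (s + 1) = sel I s + s := by
  have hsI : s < I.card := hcard ▸ hs
  set x := sel I s with hx
  have hx1 : 1 ≤ x := sel_pos h0I hsI
  have hxmem : x ∈ I := (sel_mem hsI).1
  have hxrk : rk I x = s := (sel_mem hsI).2
  have hxcard : I.card ≤ x + s := by
    have := mem_I_bound h0I hxmem
    omega
  have hup : buildL A I (x + s) ≤ s := by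
    rw [buildL_high (by omega)]
    have hsub : I.filter (fun y => x + s + 1 ≤ y + rk I y) ⊆ I.filter (fun y => rk I y < s) := by
      intro y hy
      simp only [Finset.mem_filter] at hy ⊢
      refine ⟨hy.1, ?_⟩
      by_contra hge
      push_neg at hge
      have hyt : rk I y < I.card := rk_lt_card hy.1
      have hsel : sel I (rk I y) = y := sel_eq hy.1 rfl
      have := sel_add_le hge hyt
      omega
    have hcardle : (I.filter (fun y => rk I y < s)).card ≤ s := by
      have : (I.filter (fun y => rk I y < s)).card ≤ (Finset.range s).card := by
        apply Finset.card_le_card_of_injOn (rk I)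
        · intro y hy
          simp only [Finset.mem_coe, Finset.mem_filter] at hy
          exact Finset.mem_range.2 hy.2
        · apply Set.InjOn.mono _ rk_injOn
          intro y hy
          simp only [Finset.coe_filter, Set.mem_setOf_eq] at hy
          exact hy.1
      simpa using this
    exact le_trans (Finset.card_le_card hsub) hcardle
  have hdown : s + 1 ≤ buildL A I (x + s - 1) := by
    rcases lt_or_ge (x + s - 1) A.card with hlow | hhigh
    · rw [buildL_low hlow]
      have := sel_pos h0A hlow
      omega
    · rw [buildL_high (by omega)]
      have heq : x + s - 1 + 1 = x + s := by omega
      rw [heq]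
      have hsub : (Finset.range (s + 1)).image (sel I) ⊆
          I.filter (fun y => x + s ≤ y + rk I y) := by
        intro y hy
        simp only [Finset.mem_image, Finset.mem_range] at hy
        obtain ⟨t, ht, rfl⟩ := hy
        have htI : t < I.card := by omega
        simp only [Finset.mem_filter]
        refine ⟨(sel_mem htI).1, ?_⟩
        rw [(sel_mem htI).2]
        have := sel_add_le (t := t) (t' := s) (by omega) hsI
        omega
      have hcardimg : ((Finset.range (s + 1)).image (sel I)).card = s + 1 := by
        rw [Finset.card_image_of_injOn, Finset.card_range]
        apply Set.InjOn.mono _ sel_injOn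
        intro t ht
        simp only [Finset.coe_range, Set.mem_Iio] at ht ⊢
        omega
      calc s + 1 = ((Finset.range (s + 1)).image (sel I)).card := hcardimg.symm
        _ ≤ _ := Finset.card_le_card hsub
  have hparts := buildL_isPartition hcard h0A (A := A) (I := I)
  have h1 : x + s - 1 < pconj (buildL A I) (s + 1) := (lt_pconj_iff hparts (by omega)).2 hdown
  have h2 : ¬ (x + s < pconj (buildL A I) (s + 1)) := by
    rw [lt_pconj_iff hparts (by omega)]
    omega
  omega

lemma buildL_Iset {A I : Finset ℕ} (hcard : A.card = I.card) (h0A : 0 ∉ A) (h0I : 0 ∉ I)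
    (hk : 1 ≤ A.card) : Iset (buildL A I) = I := by
  rw [Iset, buildL_durfee hcard h0A hk]
  rw [show ((Finset.range A.card).image fun s => pconj (buildL A I) (s + 1) - s)
      = (Finset.range A.card).image (sel I) from ?_]
  · rw [hcard, image_sel]
  · apply Finset.image_congr
    intro s hsr
    simp only [Finset.coe_range, Set.mem_Iio] at hsr
    show pconj (buildL A I) (s + 1) - s = sel I s
    rw [buildL_pconj hcard h0A h0I hsr]
    omega

lemma buildL_parea {A I : Finset ℕ} (hcard : A.card = I.card) (h0A : 0 ∉ A) (h0I : 0 ∉ I)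
    (hk : 1 ≤ A.card) :
    parea (buildL A I) + A.card = (∑ v ∈ A, v) + (∑ x ∈ I, x) := by
  have h := sum_Aset_Iset (buildL_isPartition hcard h0A) (buildL_f0 h0A hk) (f := buildL A I)
  rw [buildL_Aset hcard h0A hk, buildL_Iset hcard h0A h0I hk, buildL_durfee hcard h0A hk] at h
  omega

lemma buildL_round {f : ℕ →₀ ℕ} (hf : IsPartition f) (h0 : 1 ≤ f 0) :
    buildL (Aset f) (Iset f) = f := by
  set k := pdurfee f with hk
  have hcardA : (Aset f).card = k := card_Aset hf h0
  ext r
  rcases lt_or_ge r k with hr | hr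
  · rw [buildL_low (by omega)]
    have : sel (Aset f) r = f r - r := enum_sel (Aset_anti hf h0) (by omega)
    rw [this]
    have := f_lt_of_lt_durfee hf (hk ▸ hr) h0
    omega
  · rw [buildL_high (by omega)]
    have hfr : f r ≤ k := by
      obtain ⟨hk1, _, hk3⟩ := durfee_spec hf h0
      have : f r ≤ f (pdurfee f) := hf (pdurfee f) r (by omega)
      omega
    have himg : (Iset f).filter (fun x => r + 1 ≤ x + rk (Iset f) x)
        = (Finset.range (f r)).image (fun s => pconj f (s + 1) - s) := by
      ext x
      simp only [Finset.mem_filter, Finset.mem_image, Finset.mem_range]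
      constructor
      · rintro ⟨hxI, hcond⟩
        rw [Iset, ← hk] at hxI
        simp only [Finset.mem_image, Finset.mem_range] at hxI
        obtain ⟨s, hs, rfl⟩ := hxI
        have hrk : rk (Iset f) (pconj f (s + 1) - s) = s := by
          have := enum_rk (Iset_anti hf h0) (s := s) (hk ▸ hs)
          rw [Iset, ← hk]
          exact this
        rw [hrk] at hcond
        have hge := pconj_ge_of_lt_durfee hf (hk ▸ hs) h0
        have hpc : r < pconj f (s + 1) := by omega
        have hsf : s + 1 ≤ f r := (lt_pconj_iff hf (by omega)).1 hpc
        exact ⟨s, by omega, rfl⟩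
      · rintro ⟨s, hs, rfl⟩
        have hsk : s < k := by omega
        have hmem : pconj f (s + 1) - s ∈ Iset f := by
          rw [Iset, ← hk]
          exact Finset.mem_image.2 ⟨s, Finset.mem_range.2 hsk, rfl⟩
        have hrk : rk (Iset f) (pconj f (s + 1) - s) = s := by
          have := enum_rk (Iset_anti hf h0) (s := s) hsk
          rw [Iset, ← hk]
          exact this
        refine ⟨hmem, ?_⟩
        rw [hrk]
        have hge := pconj_ge_of_lt_durfee hf hsk h0
        have hpc : r < pconj f (s + 1) := (lt_pconj_iff hf (by omega)).2 (by omega)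
        omega
    rw [himg, Finset.card_image_of_injOn, Finset.card_range]
    apply Set.InjOn.mono _ (enum_injOn (Iset_anti hf h0))
    intro s hs
    simp only [Finset.coe_range, Set.mem_Iio] at hs ⊢
    omega
def MidP (n : ℕ) (p : Finset ℕ × Finset ℕ) : Prop :=
  p.1.card = p.2.card ∧ 0 ∉ p.1 ∧ 0 ∉ p.2 ∧
    (∑ v ∈ p.1, v) + (∑ x ∈ p.2, x) = n + p.1.card

def eqv1 (n : ℕ) : {f : ℕ →₀ ℕ // IsPartition f ∧ pchArea f = n}
    ≃ {p : Finset ℕ × Finset ℕ // MidP n p} where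
  toFun := fun x => ⟨(Vset x.1, Dset x.1), by
    obtain ⟨hf, harea⟩ := x.2
    have hc := card_Dset hf
    have hsum := pchArea_eq hf
    refine ⟨hc.symm, ?_, ?_, ?_⟩
    · intro h; exact absurd (mem_Vset.1 h).1 (by simp)
    · intro h; have := (mem_Dset.1 h).1; omega
    · show (∑ v ∈ Vset x.1, v) + (∑ i ∈ Dset x.1, i) = n + (Vset x.1).card
      omega⟩
  invFun := fun p => ⟨rebuild p.1.1 p.1.2 p.2.1, by
    obtain ⟨hc, h0A, h0I, hsum⟩ := p.2
    have hpart := rebuild_isPartition p.1.1 p.1.2 hc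
    refine ⟨hpart, ?_⟩
    have h := pchArea_eq hpart
    rw [Dset_rebuild _ _ _ h0A h0I, Vset_rebuild _ _ _ h0A h0I] at h
    omega⟩
  left_inv := fun x => by
    apply Subtype.ext
    exact rebuild_round x.2.1
  right_inv := fun p => by
    obtain ⟨hc, h0A, h0I, hsum⟩ := p.2
    apply Subtype.ext
    show (Vset _, Dset _) = p.1
    rw [Vset_rebuild _ _ _ h0A h0I, Dset_rebuild _ _ _ h0A h0I]

def eqv2 (n : ℕ) (hn : 1 ≤ n) : {f : ℕ →₀ ℕ // IsPartition f ∧ parea f = n}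
    ≃ {p : Finset ℕ × Finset ℕ // MidP n p} where
  toFun := fun x => ⟨(Aset x.1, Iset x.1), by
    obtain ⟨hf, harea⟩ := x.2
    have h0 : 1 ≤ x.1 0 := f0_pos hf (by omega)
    have hcA := card_Aset hf h0
    have hcI := card_Iset hf h0
    have hsum := sum_Aset_Iset hf h0
    exact ⟨show (Aset x.1).card = (Iset x.1).card by omega,
      zero_not_mem_Aset hf h0, zero_not_mem_Iset hf h0,
      show (∑ v ∈ Aset x.1, v) + (∑ i ∈ Iset x.1, i) = n + (Aset x.1).card by omega⟩⟩
  invFun := fun p => ⟨buildL p.1.1 p.1.2, by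
    obtain ⟨hc, h0A, h0I, hsum⟩ := p.2
    have hk : 1 ≤ p.1.1.card := by
      by_contra hcon
      push_neg at hcon
      have hA : p.1.1 = ∅ := Finset.card_eq_zero.1 (by omega)
      have hI : p.1.2 = ∅ := Finset.card_eq_zero.1 (by omega)
      rw [hA, hI] at hsum
      simp at hsum
      omega
    refine ⟨buildL_isPartition hc h0A, ?_⟩
    have := buildL_parea hc h0A h0I hk
    omega⟩
  left_inv := fun x => by
    apply Subtype.ext
    obtain ⟨hf, harea⟩ := x.2
    exact buildL_round hf (f0_pos hf (by omega))
  right_inv := fun p => by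
    obtain ⟨hc, h0A, h0I, hsum⟩ := p.2
    have hk : 1 ≤ p.1.1.card := by
      by_contra hcon
      push_neg at hcon
      have hA : p.1.1 = ∅ := Finset.card_eq_zero.1 (by omega)
      have hI : p.1.2 = ∅ := Finset.card_eq_zero.1 (by omega)
      rw [hA, hI] at hsum
      simp at hsum
      omega
    apply Subtype.ext
    show (Aset _, Iset _) = p.1
    rw [buildL_Aset hc h0A hk, buildL_Iset hc h0A h0I hk]

/-- For all `n ≥ 1`, the number of partitions of `n` equals the number of
partitions with cohook area `n`. -/
theorem statement4 (n : ℕ) (hn : 1 ≤ n) :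
    Nat.card {f : ℕ →₀ ℕ // IsPartition f ∧ parea f = n}
      = Nat.card {f : ℕ →₀ ℕ // IsPartition f ∧ pchArea f = n} := by
  exact Nat.card_congr ((eqv2 n hn).trans (eqv1 n).symm)
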